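/- Let X be an A-bounded operator on H admitting an A-adjoint Xs (i.e. A∘Xs = X*∘A). Then w_𝔸([[0,X],[Xs,0]]) = ‖X‖_A. -/

import Mathlib

noncomputable def sInner {E : Type*} [NormedAddCommGroup E] [InnerProductSpace ℂ E]
    (A : E →L[ℂ] E) (x y : E) : ℂ := inner ℂ (A x) y

noncomputable def sNorm {E : Type*} [NormedAddCommGroup E] [InnerProductSpace ℂ E]
    (A : E →L[ℂ] E) (x : E) : ℝ := Real.sqrt (sInner A x x).re

/-- The `A`-operator seminorm. -/
noncomputable def opSNorm {E : Type*} [NormedAddCommGroup E] [InnerProductSpace ℂ E]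
    (A T : E →L[ℂ] E) : ℝ := sSup {c | ∃ x : E, sNorm A x = 1 ∧ c = sNorm A (T x)}

/-- The `A`-numerical radius. -/
noncomputable def numRad {E : Type*} [NormedAddCommGroup E] [InnerProductSpace ℂ E]
    (A T : E →L[ℂ] E) : ℝ := sSup {c | ∃ x : E, sNorm A x = 1 ∧ c = ‖sInner A (T x) x‖}

/-- `T` is `A`-bounded. -/
def ABounded {E : Type*} [NormedAddCommGroup E] [InnerProductSpace ℂ E]
    (A T : E →L[ℂ] E) : Prop := ∃ c > 0, ∀ x : E, sNorm A (T x) ≤ c * sNorm A x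

/-- The 2×2 block operator `[[T, X], [Y, S]]` on `H ⊕ H` (with the ℓ² product structure). -/
noncomputable def blk {H : Type*} [NormedAddCommGroup H] [InnerProductSpace ℂ H]
    (T X Y S : H →L[ℂ] H) : WithLp 2 (H × H) →L[ℂ] WithLp 2 (H × H) :=
  ((WithLp.prodContinuousLinearEquiv 2 ℂ H H).symm.toContinuousLinearMap.comp
    (((T.coprod X).prod (Y.coprod S)).comp
      (WithLp.prodContinuousLinearEquiv 2 ℂ H H).toContinuousLinearMap))

/-- The diagonal operator `𝔸 = diag(A, A)` on `H ⊕ H`. -/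
noncomputable def twoA {H : Type*} [NormedAddCommGroup H] [InnerProductSpace ℂ H]
    (A : H →L[ℂ] H) : WithLp 2 (H × H) →L[ℂ] WithLp 2 (H × H) := blk A 0 0 A

/-! Write `A = B⋆B` for a bounded `B`, so that `⟨x, y⟩_A = ⟪B x, B y⟫` and the usual
Cauchy–Schwarz inequality holds for the semi-inner product. Since `Xs` is an `A`-adjoint of `X`,
the quadratic form of `[[0, X], [Xs, 0]]` at `(x, y)` is `2 Re ⟨X y, x⟩_A`, which is at most
`2 ‖x‖_A ‖y‖_A ‖X‖_A ≤ ‖X‖_A` on the `𝔸`-unit sphere. Conversely, for `‖x‖_A = 1` the value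
`‖X x‖_A` is attained at `(X x / ‖X x‖_A, x) / √2`. -/

open ContinuousLinearMap ComplexConjugate

section SemiInner

variable {E : Type*} [NormedAddCommGroup E] [InnerProductSpace ℂ E] {A : E →L[ℂ] E}

theorem sNorm_nonneg (x : E) : 0 ≤ sNorm A x := Real.sqrt_nonneg _

theorem sInner_smul_left (c : ℂ) (x y : E) : sInner A (c • x) y = conj c * sInner A x y := by
  simp only [sInner, map_smul, inner_smul_left]

theorem sInner_smul_right (c : ℂ) (x y : E) : sInner A x (c • y) = c * sInner A x y := by
  simp only [sInner, inner_smul_right]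

theorem sNorm_smul (c : ℂ) (x : E) : sNorm A (c • x) = ‖c‖ * sNorm A x := by
  rw [sNorm, sInner_smul_left, sInner_smul_right, ← mul_assoc, Complex.conj_mul',
    ← Complex.ofReal_pow, Complex.re_ofReal_mul, Real.sqrt_mul (sq_nonneg _),
    Real.sqrt_sq (norm_nonneg _), sNorm]

theorem sq_sNorm (hA : A.IsPositive) (x : E) : sNorm A x ^ 2 = (sInner A x x).re :=
  Real.sq_sqrt (hA.re_inner_nonneg_left x)

theorem conj_sInner (hA : A.IsPositive) (x y : E) : conj (sInner A x y) = sInner A y x := by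
  rw [sInner, sInner, inner_conj_symm, hA.inner_left_eq_inner_right]

theorem sInner_of_comp_eq_adjoint_comp [CompleteSpace E] {X Xs : E →L[ℂ] E}
    (hXs : A.comp Xs = (adjoint X).comp A) (x y : E) :
    sInner A (Xs x) y = sInner A x (X y) := by
  rw [sInner, ← comp_apply, hXs, comp_apply, adjoint_inner_left, sInner]

theorem sInner_star_mul_self [CompleteSpace E] (B : E →L[ℂ] E) (x y : E) :
    sInner (star B * B) x y = inner ℂ (B x) (B y) := by
  rw [sInner, mul_apply_eq_comp, star_eq_adjoint, adjoint_inner_left]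

theorem sNorm_star_mul_self [CompleteSpace E] (B : E →L[ℂ] E) (x : E) :
    sNorm (star B * B) x = ‖B x‖ := by
  rw [sNorm, sInner_star_mul_self]
  exact (congrArg Real.sqrt (inner_self_eq_norm_sq (𝕜 := ℂ) _)).trans
    (Real.sqrt_sq (norm_nonneg _))

theorem norm_sInner_le [CompleteSpace E] (hA : A.IsPositive) (x y : E) :
    ‖sInner A x y‖ ≤ sNorm A x * sNorm A y := by
  obtain ⟨B, rfl⟩ :=
    CStarAlgebra.nonneg_iff_eq_star_mul_self.mp ((nonneg_iff_isPositive A).mpr hA)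
  rw [sInner_star_mul_self, sNorm_star_mul_self, sNorm_star_mul_self]
  exact norm_inner_le_norm _ _

theorem bddAbove_opSNorm_set {X : E →L[ℂ] E} (hX : ABounded A X) :
    BddAbove {c | ∃ x : E, sNorm A x = 1 ∧ c = sNorm A (X x)} := by
  obtain ⟨c, -, hc⟩ := hX
  refine ⟨c, ?_⟩
  rintro _ ⟨x, hx, rfl⟩
  simpa [hx] using hc x

theorem opSNorm_nonneg (X : E →L[ℂ] E) : 0 ≤ opSNorm A X :=
  Real.sSup_nonneg fun _ ⟨_, _, hc⟩ => hc ▸ sNorm_nonneg _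

theorem numRad_nonneg (T : E →L[ℂ] E) : 0 ≤ numRad A T :=
  Real.sSup_nonneg fun _ ⟨_, _, hc⟩ => hc ▸ norm_nonneg _

theorem sNorm_apply_le_opSNorm_mul {X : E →L[ℂ] E} (hX : ABounded A X) (x : E) :
    sNorm A (X x) ≤ opSNorm A X * sNorm A x := by
  rcases (sNorm_nonneg (A := A) x).eq_or_lt with hx | hx
  · obtain ⟨c, -, hc⟩ := hX
    rw [← hx, mul_zero]
    simpa [← hx] using hc x
  · have hunit : sNorm A ((sNorm A x : ℂ)⁻¹ • x) = 1 := by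
      rw [sNorm_smul, norm_inv, Complex.norm_real, Real.norm_of_nonneg hx.le,
        inv_mul_cancel₀ hx.ne']
    have := le_csSup (bddAbove_opSNorm_set hX) ⟨_, hunit, rfl⟩
    rw [map_smul, sNorm_smul, norm_inv, Complex.norm_real, Real.norm_of_nonneg hx.le,
      inv_mul_le_iff₀ hx] at this
    rwa [mul_comm] at this

end SemiInner

section Block

variable {H : Type*} [NormedAddCommGroup H] [InnerProductSpace ℂ H] {A : H →L[ℂ] H}

@[simp]
theorem blk_apply_fst (T X Y S : H →L[ℂ] H) (z : WithLp 2 (H × H)) :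
    (blk T X Y S z).fst = T z.fst + X z.snd := rfl

@[simp]
theorem blk_apply_snd (T X Y S : H →L[ℂ] H) (z : WithLp 2 (H × H)) :
    (blk T X Y S z).snd = Y z.fst + S z.snd := rfl

theorem sInner_twoA (z w : WithLp 2 (H × H)) :
    sInner (twoA A) z w = sInner A z.fst w.fst + sInner A z.snd w.snd := by
  change inner ℂ (blk A 0 0 A z).fst w.fst + inner ℂ (blk A 0 0 A z).snd w.snd = _
  simp [sInner]

theorem sNorm_twoA_eq_one_iff (hA : A.IsPositive) (z : WithLp 2 (H × H)) :
    sNorm (twoA A) z = 1 ↔ sNorm A z.fst ^ 2 + sNorm A z.snd ^ 2 = 1 := by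
  rw [sNorm, Real.sqrt_eq_one, sInner_twoA, Complex.add_re, sq_sNorm hA, sq_sNorm hA]

theorem sInner_twoA_blk_antidiag [CompleteSpace H] (hA : A.IsPositive) {X Xs : H →L[ℂ] H}
    (hXs : A.comp Xs = (adjoint X).comp A) (z : WithLp 2 (H × H)) :
    sInner (twoA A) (blk 0 X Xs 0 z) z = (2 * (sInner A (X z.snd) z.fst).re : ℝ) := by
  rw [sInner_twoA, blk_apply_fst, blk_apply_snd, zero_apply, zero_apply, zero_add, add_zero,
    sInner_of_comp_eq_adjoint_comp hXs, ← conj_sInner hA (X z.snd), Complex.add_conj]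

theorem norm_sInner_twoA_blk_antidiag_le [CompleteSpace H] (hA : A.IsPositive)
    {X Xs : H →L[ℂ] H} (hX : ABounded A X) (hXs : A.comp Xs = (adjoint X).comp A)
    {z : WithLp 2 (H × H)} (hz : sNorm (twoA A) z = 1) :
    ‖sInner (twoA A) (blk 0 X Xs 0 z) z‖ ≤ opSNorm A X := by
  rw [sNorm_twoA_eq_one_iff hA] at hz
  have hab : 2 * (sNorm A z.fst * sNorm A z.snd) ≤ 1 := by
    nlinarith [sq_nonneg (sNorm A z.fst - sNorm A z.snd)]
  calc ‖sInner (twoA A) (blk 0 X Xs 0 z) z‖ = 2 * |(sInner A (X z.snd) z.fst).re| := by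
        rw [sInner_twoA_blk_antidiag hA hXs, Complex.norm_real, Real.norm_eq_abs, abs_mul,
          abs_two]
    _ ≤ 2 * (sNorm A (X z.snd) * sNorm A z.fst) := by
        gcongr
        exact (Complex.abs_re_le_norm _).trans (norm_sInner_le hA _ _)
    _ ≤ 2 * (opSNorm A X * sNorm A z.snd * sNorm A z.fst) := by
        gcongr
        · exact sNorm_nonneg _
        · exact sNorm_apply_le_opSNorm_mul hX _
    _ = opSNorm A X * (2 * (sNorm A z.fst * sNorm A z.snd)) := by ring
    _ ≤ opSNorm A X := mul_le_of_le_one_right (opSNorm_nonneg X) hab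

theorem exists_sNorm_twoA_eq_one_norm_sInner_eq [CompleteSpace H] (hA : A.IsPositive)
    {X Xs : H →L[ℂ] H} (hXs : A.comp Xs = (adjoint X).comp A) {x : H} (hx : sNorm A x = 1) :
    ∃ z : WithLp 2 (H × H), sNorm (twoA A) z = 1 ∧
      ‖sInner (twoA A) (blk 0 X Xs 0 z) z‖ = sNorm A (X x) := by
  rcases (sNorm_nonneg (A := A) (X x)).eq_or_lt with hv | hv
  · refine ⟨WithLp.toLp 2 (x, 0), ?_, ?_⟩
    · rw [sNorm_twoA_eq_one_iff hA, WithLp.toLp_fst, WithLp.toLp_snd, hx]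
      simp [sNorm, sInner]
    · rw [sInner_twoA_blk_antidiag hA hXs, ← hv]
      simp [sInner]
  · obtain ⟨r, hr⟩ : ∃ r : ℝ, r ^ 2 = 1 / 2 := ⟨√(1 / 2), Real.sq_sqrt (by norm_num)⟩
    refine ⟨WithLp.toLp 2 (((r / sNorm A (X x) : ℝ) : ℂ) • X x, (r : ℂ) • x), ?_, ?_⟩
    · rw [sNorm_twoA_eq_one_iff hA, WithLp.toLp_fst, WithLp.toLp_snd, sNorm_smul, sNorm_smul,
        Complex.norm_real, Complex.norm_real, hx, mul_one, mul_pow, Real.norm_eq_abs,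
        Real.norm_eq_abs, sq_abs, sq_abs, div_pow]
      field_simp
      linarith
    · rw [sInner_twoA_blk_antidiag hA hXs, WithLp.toLp_fst, WithLp.toLp_snd, map_smul,
        sInner_smul_left, sInner_smul_right, Complex.conj_ofReal, ← mul_assoc,
        ← Complex.ofReal_mul, Complex.re_ofReal_mul, ← sq_sNorm hA]
      have hval : 2 * (r * (r / sNorm A (X x)) * sNorm A (X x) ^ 2) = sNorm A (X x) := by
        field_simp
        linear_combination 2 * hr
      rw [hval, Complex.norm_real, Real.norm_of_nonneg hv.le]

end Block

theorem stmt10 {H : Type*} [NormedAddCommGroup H] [InnerProductSpace ℂ H] [CompleteSpace H]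
    (A : H →L[ℂ] H) (hA : A.IsPositive)
    (X Xs : H →L[ℂ] H) (hX : ABounded A X)
    (hXs : A.comp Xs = (ContinuousLinearMap.adjoint X).comp A) :
    numRad (twoA A) (blk 0 X Xs 0) = opSNorm A X := by
  have hle : ∀ c ∈ {c | ∃ z, sNorm (twoA A) z = 1 ∧
      c = ‖sInner (twoA A) (blk 0 X Xs 0 z) z‖}, c ≤ opSNorm A X := by
    rintro _ ⟨z, hz, rfl⟩
    exact norm_sInner_twoA_blk_antidiag_le hA hX hXs hz
  refine le_antisymm (Real.sSup_le hle (opSNorm_nonneg X)) (Real.sSup_le ?_ (numRad_nonneg _))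
  rintro _ ⟨x, hx, rfl⟩
  obtain ⟨z, hz, hzx⟩ := exists_sNorm_twoA_eq_one_norm_sInner_eq hA hXs hx
  exact le_csSup ⟨_, hle⟩ ⟨z, hz, hzx.symm⟩
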